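/- arXiv:1303.1263 — 6 statements merged into one kernel-verified Lean document; each statement's English description precedes it below -/
import Mathlib

section
/- Let h be analytic on a neighborhood of the closed unit disk, m ≥ 2 an integer, g analytic with g'(z) = z^{m-1} h'(z), and φ(t) = h(e^{it}) + conj(g(e^{it})). Then for all real t, with z = e^{it}, one has Im(φ''(t) · conj(φ'(t))) = (m−1)|h'(z)|² · Re( z̄^{m+1} (conj(h'(z))/|h'(z)|)² − 1 ) whenever h'(z) ≠ 0, and in particular Im(φ''(t) · conj(φ'(t))) ≤ 0. -/
open Complex Metric ComplexConjugate

/-!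
Write `z = e^{it}`, `a = z h'(z)` and `u = z^{m-1}`. On the circle, `g' = z^{m-1} h'` gives
`φ' = i (a - conj (u a))`, and `u' = i (m-1) u`. In `φ'' · conj φ'` every term containing the
derivative of `a` is paired with its conjugate, because `|u| = 1`; what survives is
`i (m-1) (conj (u a²) - |a|²)`, whose imaginary part is `(m-1) (Re (conj (u a²)) - |a|²) ≤ 0`.
-/

theorem hasDerivAt_exp_I_mul (t : ℝ) :
    HasDerivAt (fun s : ℝ => exp (I * s)) (I * exp (I * t)) t := by
  simpa [mul_comm] using (((hasDerivAt_id (t : ℂ)).const_mul I).cexp).comp_ofReal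

theorem hasDerivAt_exp_I_mul_pow (n : ℕ) (t : ℝ) :
    HasDerivAt (fun s : ℝ => exp (I * s) ^ n) (I * n * exp (I * t) ^ n) t := by
  simp only [← exp_nat_mul]
  convert (((hasDerivAt_id (t : ℂ)).const_mul (n * I)).cexp).comp_ofReal using 1
  · ext s; simp only [id]; ring_nf
  · simp only [id]; ring_nf

theorem HasDerivAt.comp_exp_I_mul {f : ℂ → ℂ} {f' : ℂ} {t : ℝ}
    (hf : HasDerivAt f f' (Complex.exp (I * t))) :
    HasDerivAt (fun s : ℝ => f (Complex.exp (I * s))) (I * Complex.exp (I * t) * f') t := by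
  rw [mul_comm]
  exact hf.comp t (hasDerivAt_exp_I_mul t)

theorem deriv_add_conj_comp_exp_I_mul {h g : ℂ → ℂ} {φ : ℝ → ℂ} (n : ℕ)
    (hh : ∀ s : ℝ, DifferentiableAt ℂ h (Complex.exp (I * s)))
    (hg : ∀ s : ℝ, DifferentiableAt ℂ g (Complex.exp (I * s)))
    (hg' : ∀ s : ℝ, deriv g (Complex.exp (I * s)) =
      Complex.exp (I * s) ^ n * deriv h (Complex.exp (I * s)))
    (hφ : ∀ s : ℝ, φ s = h (Complex.exp (I * s)) + conj (g (Complex.exp (I * s)))) (s : ℝ) :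
    deriv φ s = I * (Complex.exp (I * s) * deriv h (Complex.exp (I * s)) -
      conj (Complex.exp (I * s) ^ n * (Complex.exp (I * s) * deriv h (Complex.exp (I * s))))) := by
  have hderiv : HasDerivAt (fun s : ℝ => h (Complex.exp (I * s)) + conj (g (Complex.exp (I * s))))
      _ s := (hh s).hasDerivAt.comp_exp_I_mul.add (hg s).hasDerivAt.comp_exp_I_mul.star
  rw [← funext hφ] at hderiv
  rw [hderiv.deriv, hg' s]
  simp only [star_def, map_mul, conj_I]
  ring

theorem im_mul_conj_eq (a a' u : ℂ) (k : ℝ) (hu : ‖u‖ = 1) :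
    ((I * (a' - conj (u * a')) - k * conj (u * a)) * conj (I * (a - conj (u * a)))).im =
      k * ((conj (u * a ^ 2)).re - ‖a‖ ^ 2) := by
  have hu' : conj u * u = 1 := by
    rw [mul_comm, mul_conj, normSq_eq_norm_sq, hu]; norm_num
  have ha : a * conj a = ((‖a‖ ^ 2 : ℝ) : ℂ) := by rw [mul_conj, normSq_eq_norm_sq]
  set x := a' * conj a
  set y := u * a * a'
  have hexpand : (I * (a' - conj (u * a')) - k * conj (u * a)) * conj (I * (a - conj (u * a))) =
      (x + conj x) - (y + conj y) + I * k * (conj (u * a ^ 2) - ((‖a‖ ^ 2 : ℝ) : ℂ)) := by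
    simp only [x, y, map_mul, map_sub, map_pow, conj_conj, conj_I, ← ha]
    linear_combination (a * conj a' - I * k * a * conj a) * hu' +
      (-a' * conj a + a' * u * a + conj u * conj a' * conj a - conj u * conj a' * u * a) * I_sq
  rw [hexpand]
  simp [add_conj, conj_re, -ofReal_pow]

theorem im_deriv_deriv_mul_conj_deriv {φ A U : ℝ → ℂ} {t k : ℝ}
    (hφ : ∀ s, deriv φ s = I * (A s - conj (U s * A s)))
    (hA : DifferentiableAt ℝ A t) (hU : HasDerivAt U (I * k * U t) t) (hU1 : ‖U t‖ = 1) :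
    (deriv (deriv φ) t * conj (deriv φ t)).im = k * ((conj (U t * A t ^ 2)).re - ‖A t‖ ^ 2) := by
  have hφ'' : HasDerivAt (deriv φ)
      (I * (deriv A t - conj (I * k * U t * A t + U t * deriv A t))) t := by
    rw [funext hφ]
    exact ((hA.hasDerivAt.sub (hU.mul hA.hasDerivAt).star).const_mul I)
  rw [hφ''.deriv, hφ, ← im_mul_conj_eq (A t) (deriv A t) (U t) k hU1]
  congr 2
  simp only [map_add, map_mul, conj_I, conj_ofReal]
  linear_combination (k * conj (U t) * conj (A t)) * I_sq

theorem re_mul_sq_sub_norm_sq (v w : ℂ) :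
    (v * w ^ 2).re - ‖w‖ ^ 2 = ‖w‖ ^ 2 * (v * (w / ‖w‖) ^ 2 - 1).re := by
  rcases eq_or_ne w 0 with rfl | hw
  · simp
  rw [div_pow, ← mul_div_assoc, sub_re, one_re, ← ofReal_pow, div_ofReal_re]
  field_simp

/-- Im(φ''(t)·conj(φ'(t))) = (m−1)|h'(z)|²·Re(z̄^{m+1}(conj h'(z)/|h'(z)|)² − 1)
whenever h'(z) ≠ 0 (z = e^{it}), and in particular Im(φ''(t)·conj(φ'(t))) ≤ 0. -/
theorem stmt_2 (h g : ℂ → ℂ) (m : ℕ) (hm : 2 ≤ m)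
    (hh : AnalyticOnNhd ℂ h (closedBall 0 1))
    (hg : AnalyticOnNhd ℂ g (closedBall 0 1))
    (hg' : ∀ z : ℂ, z ∈ closedBall (0 : ℂ) 1 → deriv g z = z ^ (m - 1) * deriv h z)
    (φ : ℝ → ℂ)
    (hφ : ∀ t : ℝ, φ t = h (Complex.exp (Complex.I * t)) +
      (starRingEnd ℂ) (g (Complex.exp (Complex.I * t))))
    (t : ℝ) :
    (deriv h (Complex.exp (Complex.I * t)) ≠ 0 →
      (deriv (deriv φ) t * (starRingEnd ℂ) (deriv φ t)).im =
        ((m : ℝ) - 1) * ‖deriv h (Complex.exp (Complex.I * t))‖ ^ 2 *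
          (((starRingEnd ℂ) (Complex.exp (Complex.I * t))) ^ (m + 1) *
            ((starRingEnd ℂ) (deriv h (Complex.exp (Complex.I * t))) /
              (‖deriv h (Complex.exp (Complex.I * t))‖ : ℂ)) ^ 2 - 1).re) ∧
    (deriv (deriv φ) t * (starRingEnd ℂ) (deriv φ t)).im ≤ 0 := by
  set z := Complex.exp (I * t)
  set w := deriv h z
  have hmem (s : ℝ) : Complex.exp (I * s) ∈ closedBall (0 : ℂ) 1 := by
    simp [norm_exp_I_mul_ofReal]
  have hφ' := deriv_add_conj_comp_exp_I_mul (m - 1)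
    (fun s => (hh _ (hmem s)).differentiableAt) (fun s => (hg _ (hmem s)).differentiableAt)
    (fun s => hg' _ (hmem s)) hφ
  have hA : DifferentiableAt ℝ (fun s : ℝ => Complex.exp (I * s) * deriv h (Complex.exp (I * s))) t :=
    (((differentiableAt_id.mul (hh.deriv _ (hmem t)).differentiableAt).hasDerivAt).comp_exp_I_mul
      ).differentiableAt
  have key := im_deriv_deriv_mul_conj_deriv hφ' hA (hasDerivAt_exp_I_mul_pow (m - 1) t)
    (by rw [norm_pow, norm_exp_I_mul_ofReal, one_pow])
  have hu : conj (z ^ (m - 1) * (z * w) ^ 2) = conj z ^ (m + 1) * conj w ^ 2 := by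
    rw [← map_pow, ← map_pow, ← map_mul]
    congr 1
    rw [mul_pow, ← mul_assoc, ← pow_add, show m - 1 + 2 = m + 1 by omega]
  have hnorm : ‖z * w‖ = ‖w‖ := by rw [norm_mul, norm_exp_I_mul_ofReal, one_mul]
  rw [hu, hnorm, Nat.cast_sub (by omega), Nat.cast_one] at key
  refine ⟨fun _ => ?_, ?_⟩
  · rw [key, mul_assoc, ← norm_conj w, re_mul_sq_sub_norm_sq]
  · rw [key]
    refine mul_nonpos_of_nonneg_of_nonpos (sub_nonneg.2 (by exact_mod_cast (by omega : 1 ≤ m))) (sub_nonpos.2 ?_)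
    calc (conj z ^ (m + 1) * conj w ^ 2).re ≤ ‖conj z ^ (m + 1) * conj w ^ 2‖ := re_le_norm _
      _ = ‖w‖ ^ 2 := by simp [norm_exp_I_mul_ofReal, z]
end

section
/- Let p ≥ 1 and m ≥ 2 be integers, and h analytic near the closed unit disk with H(z) = h'(z)/z^{p-1} ≠ 0 for |z| ≤ 1. If Re(1 + z h''(z)/h'(z)) > −(m−1)/2 for all z in the closed unit disk, then the function F(t) = (2p+m−1)t + 2 Im(log H(e^{it})) (with a continuous branch of log) is strictly increasing on ℝ. -/
open Complex Metric Filter Topology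

/-!
Write `z = e^{it}` and `w = z h''(z)/h'(z)`. Since `H(e^{it}) = h'(e^{it}) e^{-i(p-1)t}`, the
logarithmic derivative of `t ↦ H(e^{it})` is `i (w - (p - 1))`, and the derivative of any
differentiable branch `A` of its argument is the imaginary part of that, `Re w - (p - 1)`. Hence
`F' = (2p + m - 1) + 2 (Re w - (p - 1)) = (m - 1) + 2 Re (1 + w) > 0`.
-/

theorem im_div_eq_of_eq_norm_mul_exp {g : ℝ → ℂ} {A : ℝ → ℝ} {g' : ℂ} {A' t : ℝ}
    (hg : HasDerivAt g g' t) (hA : HasDerivAt A A' t) (hgt : g t ≠ 0)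
    (hpolar : ∀ᶠ s in 𝓝 t, g s = ‖g s‖ * exp (I * A s)) :
    (g' / g t).im = A' := by
  let φ : ℝ → ℂ := fun s => g s * exp (-(I * A s))
  have hφ_real : ∀ᶠ s in 𝓝 t, φ s = ‖g s‖ := by
    filter_upwards [hpolar] with s hs
    change g s * _ = _
    conv_lhs => rw [hs]
    rw [mul_assoc, ← exp_add, add_neg_cancel, exp_zero, mul_one]
  have hφ : HasDerivAt φ (φ t * (g' / g t - I * A')) t := by
    have hE : HasDerivAt (fun s => exp (-(I * A s))) (exp (-(I * A t)) * -(I * A')) t :=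
      (hA.ofReal_comp.const_mul I).neg.cexp
    refine (hg.mul hE).congr_deriv ?_
    show _ = g t * _ * _
    field_simp
    ring
  have him : HasDerivAt (fun s => (φ s).im) (φ t * (g' / g t - I * A')).im t :=
    imCLM.hasFDerivAt.comp_hasDerivAt t hφ
  -- `φ` is real-valued near `t`, so its derivative is real as well.
  have him_zero : (φ t * (g' / g t - I * A')).im = 0 :=
    him.unique <| (hasDerivAt_const t 0).congr_of_eventuallyEq <| by
      filter_upwards [hφ_real] with s hs
      simp [hs]
  rw [hφ_real.self_of_nhds] at him_zero
  have hnorm : ‖g t‖ ≠ 0 := norm_ne_zero_iff.mpr hgt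
  simpa [mul_im, hnorm, sub_eq_zero] using him_zero

theorem hasDerivAt_comp_exp_I_mul_div_pow {f : ℂ → ℂ} {f' : ℂ} {t : ℝ} (k : ℕ)
    (hf : HasDerivAt f f' (exp (I * t))) :
    HasDerivAt (fun s : ℝ => f (exp (I * s)) / exp (I * s) ^ k)
      (I * (exp (I * t) * f' - k * f (exp (I * t))) / exp (I * t) ^ k) t := by
  have hexp : HasDerivAt (fun s : ℝ => exp (I * s)) (I * exp (I * t)) t := by
    simpa [mul_comm] using ((hasDerivAt_id (t : ℂ)).const_mul I).cexp.comp_ofReal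
  refine ((hf.comp t hexp).div (hexp.pow k) (pow_ne_zero k (exp_ne_zero _))).congr_deriv ?_
  have hz := exp_ne_zero (I * t)
  simp only [Function.comp_apply, Pi.pow_apply]
  rcases k with _ | k
  · simp only [pow_zero, CharP.cast_eq_zero, zero_mul, sub_zero, div_one, mul_one]
    ring
  · field_simp
    push_cast
    ring

theorem eq_re_mul_div_sub_of_eq_norm_mul_exp {f : ℂ → ℂ} {f' : ℂ} {A : ℝ → ℝ} {A' t : ℝ}
    (k : ℕ) (hf : HasDerivAt f f' (exp (I * t))) (hft : f (exp (I * t)) ≠ 0)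
    (hA : HasDerivAt A A' t)
    (hpolar : ∀ᶠ s : ℝ in 𝓝 t, f (exp (I * s)) / exp (I * s) ^ k =
      ‖f (exp (I * s)) / exp (I * s) ^ k‖ * exp (I * A s)) :
    A' = (exp (I * t) * f' / f (exp (I * t))).re - k := by
  have hz : exp (I * t) ^ k ≠ 0 := pow_ne_zero k (exp_ne_zero _)
  rw [← im_div_eq_of_eq_norm_mul_exp (hasDerivAt_comp_exp_I_mul_div_pow k hf) hA
    (div_ne_zero hft hz) hpolar]
  have hlogDeriv : I * (exp (I * t) * f' - k * f (exp (I * t))) / exp (I * t) ^ k /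
      (f (exp (I * t)) / exp (I * t) ^ k) = I * (exp (I * t) * f' / f (exp (I * t)) - k) := by
    field_simp
  simp [hlogDeriv]

theorem stmt_5_general (h : ℂ → ℂ) (p m : ℕ) (hp : 1 ≤ p)
    (hh : AnalyticOnNhd ℂ h (closedBall 0 1))
    (H : ℂ → ℂ) (hH : ∀ z : ℂ, H z = deriv h z / z ^ (p - 1))
    (hHne : ∀ z ∈ closedBall (0 : ℂ) 1, H z ≠ 0)
    (hre : ∀ z ∈ closedBall (0 : ℂ) 1,
      ((1 : ℂ) + z * deriv (deriv h) z / deriv h z).re > -(((m : ℝ) - 1) / 2))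
    (A : ℝ → ℝ) (hA : Differentiable ℝ A)
    (hbranch : ∀ t : ℝ, H (Complex.exp (Complex.I * t)) =
      (‖H (Complex.exp (Complex.I * t))‖ : ℂ) * Complex.exp (Complex.I * (A t)))
    (F : ℝ → ℝ)
    (hF : ∀ t : ℝ, F t = (2 * p + m - 1 : ℝ) * t + 2 * A t) :
    StrictMono F := by
  obtain rfl : H = fun z => deriv h z / z ^ (p - 1) := funext hH
  obtain rfl : F = fun t => (2 * p + m - 1 : ℝ) * t + 2 * A t := funext hF
  refine strictMono_of_deriv_pos fun t => ?_
  set z := exp (I * t)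
  have hz : z ∈ closedBall (0 : ℂ) 1 := by simp [z, Complex.norm_exp]
  have hh'z : deriv h z ≠ 0 := fun h0 => hHne z hz (by simp [h0])
  have hA' := eq_re_mul_div_sub_of_eq_norm_mul_exp (p - 1)
    (hh.deriv z hz).differentiableAt.hasDerivAt hh'z (hA t).hasDerivAt (.of_forall hbranch)
  have hF' : HasDerivAt (fun t => (2 * p + m - 1 : ℝ) * t + 2 * A t)
      ((2 * p + m - 1 : ℝ) * 1 + 2 * deriv A t) t :=
    ((hasDerivAt_id' t).const_mul _).add ((hA t).hasDerivAt.const_mul 2)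
  rw [hF'.deriv, hA', Nat.cast_sub hp]
  have hre_z := hre z hz
  simp only [add_re, one_re] at hre_z
  push_cast
  linarith

/-- if Re(1 + z h''(z)/h'(z)) > −(m−1)/2 on the closed unit disk, then
F(t) = (2p+m−1)t + 2 Im(log H(e^{it})) (continuous/differentiable branch) is strictly
increasing on ℝ. -/
theorem stmt_5 (h : ℂ → ℂ) (p m : ℕ) (hp : 1 ≤ p) (hm : 2 ≤ m)
    (hh : AnalyticOnNhd ℂ h (closedBall 0 1))
    (H : ℂ → ℂ) (hH : ∀ z : ℂ, H z = deriv h z / z ^ (p - 1))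
    (hHne : ∀ z ∈ closedBall (0 : ℂ) 1, H z ≠ 0)
    (hre : ∀ z ∈ closedBall (0 : ℂ) 1,
      ((1 : ℂ) + z * deriv (deriv h) z / deriv h z).re > -(((m : ℝ) - 1) / 2))
    (A : ℝ → ℝ) (hA : Differentiable ℝ A)
    (hbranch : ∀ t : ℝ, H (Complex.exp (Complex.I * t)) =
      (‖H (Complex.exp (Complex.I * t))‖ : ℂ) * Complex.exp (Complex.I * (A t)))
    (F : ℝ → ℝ)
    (hF : ∀ t : ℝ, F t = (2 * p + m - 1 : ℝ) * t + 2 * A t) :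
    StrictMono F :=
  stmt_5_general h p m hp hh H hH hHne hre A hA hbranch F hF
end

section
/- Let p ≥ 1, m ≥ 2 be integers. The harmonic function f(z) = z^p + conj( (p/(p+m−1)) z^{p+m-1} ) is p-valent on the open unit disk: for every w ∈ ℂ, the equation f(z) = w has at most p solutions (counted with multiplicity) in |z| < 1. -/
/-!
Put `N = p + m - 1`, so that `f z = z ^ p + conj (C * z ^ N)` with `‖C‖ = p / N < 1`.
If `f z = w ≠ 0` and `‖z‖ < 1`, then `‖z ^ p - w‖ = ‖C‖ ‖z‖ ^ N ≤ ‖C‖ ‖z ^ p‖`, so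
`ζ = z ^ p / w` lies in a sector `|arg ζ| ≤ π p / (2 N)`. Hence `z ↦ z * exp (-log ζ / p)`
maps the solutions to `p`-th roots of `w`. Two solutions with the same image are
`z` and `z * exp s` with `|Im s| ≤ π / N`, and for such a pair
`p ‖z₁ ^ N - z₂ ^ N‖ < N ‖z₁ ^ p - z₂ ^ p‖` unless `z₁ = z₂`: the moduli are compared through the
monotonicity of `r ↦ N r ^ p - p r ^ N` on `[0, 1]`, the angles through the concavity of `sin`.
Subtracting the two equations gives `‖z₁ ^ p - z₂ ^ p‖ = ‖C‖ ‖z₁ ^ N - z₂ ^ N‖`, a contradiction.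
-/

open Complex Metric

section RealInequalities

open Real

variable {p N : ℕ}

theorem Real.mul_sin_le_sin_mul {l x : ℝ} (hl₀ : 0 ≤ l) (hl₁ : l ≤ 1) (hx₀ : 0 ≤ x)
    (hx : x ≤ π) : l * Real.sin x ≤ Real.sin (l * x) := by
  simpa using strictConcaveOn_sin_Icc.concaveOn.2 ⟨hx₀, hx⟩ ⟨le_rfl, pi_pos.le⟩ hl₀
    (sub_nonneg.2 hl₁) (add_sub_cancel l 1)

theorem strictMonoOn_mul_pow_sub_mul_pow (hp : 0 < p) (hpN : p < N) :
    StrictMonoOn (fun r : ℝ => N * r ^ p - p * r ^ N) (Set.Icc 0 1) := by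
  refine strictMonoOn_of_deriv_pos (convex_Icc 0 1) (by fun_prop) fun x hx => ?_
  rw [interior_Icc] at hx
  have hderiv : HasDerivAt (fun r : ℝ => N * r ^ p - p * r ^ N)
      (N * (p * x ^ (p - 1)) - p * (N * x ^ (N - 1))) x :=
    ((hasDerivAt_pow p x).const_mul _).sub ((hasDerivAt_pow N x).const_mul _)
  rw [hderiv.deriv, ← mul_assoc, ← mul_assoc, mul_comm (p : ℝ), ← mul_sub]
  have : x ^ (N - 1) < x ^ (p - 1) := pow_lt_pow_right_of_lt_one₀ hx.1 hx.2 (by omega)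
  have : (0 : ℝ) < p := by exact_mod_cast hp
  have : (0 : ℝ) < N := by exact_mod_cast hp.trans hpN
  positivity

theorem sq_mul_pow_sub_pow_lt (hp : 0 < p) (hpN : p < N) {a b : ℝ} (ha : a ∈ Set.Icc 0 1)
    (hb : b ∈ Set.Icc 0 1) (hab : a ≠ b) :
    p ^ 2 * (a ^ N - b ^ N) ^ 2 < N ^ 2 * (a ^ p - b ^ p) ^ 2 := by
  wlog hba : b < a generalizing a b
  · have := this hb ha hab.symm (hab.lt_or_gt.resolve_right hba)
    rwa [← neg_sub (a ^ N), ← neg_sub (a ^ p), neg_sq, neg_sq] at this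
  have hmono := strictMonoOn_mul_pow_sub_mul_pow hp hpN hb ha hba
  have hN : 0 ≤ (p : ℝ) * (a ^ N - b ^ N) :=
    mul_nonneg p.cast_nonneg (sub_nonneg.2 (pow_le_pow_left₀ hb.1 hba.le N))
  rw [← mul_pow, ← mul_pow]
  exact pow_lt_pow_left₀ (by linarith) hN two_ne_zero

theorem mul_abs_sin_le_mul_abs_sin (hp : 0 < p) (hpN : p < N) {θ : ℝ} (hθ : |θ| ≤ π / N) :
    p * |Real.sin (N * θ / 2)| ≤ N * |Real.sin (p * θ / 2)| := by
  wlog hθ₀ : 0 ≤ θ generalizing θ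
  · simpa [neg_div, Real.sin_neg] using this (θ := -θ) (by rwa [abs_neg]) (by linarith)
  have hN : (0 : ℝ) < N := by exact_mod_cast hp.trans hpN
  have hNθ : N * θ ≤ π := by rwa [abs_of_nonneg hθ₀, le_div_iff₀ hN, mul_comm] at hθ
  have hconc := Real.mul_sin_le_sin_mul (l := p / N) (x := N * θ / 2) (by positivity)
    ((div_le_one hN).2 (by exact_mod_cast hpN.le)) (by positivity) (by linarith [pi_pos])
  rw [show (p : ℝ) / N * (N * θ / 2) = p * θ / 2 by field_simp] at hconc
  have hpθ : (p : ℝ) * θ ≤ N * θ := by gcongr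
  rw [abs_of_nonneg (sin_nonneg_of_nonneg_of_le_pi (by positivity) (by linarith [pi_pos])),
    abs_of_nonneg (sin_nonneg_of_nonneg_of_le_pi (by positivity) (by linarith [pi_pos]))]
  calc (p : ℝ) * Real.sin (N * θ / 2) = N * (p / N * Real.sin (N * θ / 2)) := by field_simp
    _ ≤ N * Real.sin (p * θ / 2) := by gcongr

theorem sq_mul_pow_mul_sin_sq_lt (hp : 0 < p) (hpN : p < N) {q θ : ℝ} (hq₀ : 0 < q)
    (hq₁ : q < 1) (hθ : |θ| ≤ π / N) (hθ₀ : θ ≠ 0) :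
    p ^ 2 * (q ^ N * Real.sin (N * θ / 2) ^ 2) < N ^ 2 * (q ^ p * Real.sin (p * θ / 2) ^ 2) := by
  have hN : (0 : ℝ) < N := by exact_mod_cast hp.trans hpN
  have hNθ : |N * θ / 2| < π := by
    rw [abs_div, abs_mul, Nat.abs_cast, abs_two, div_lt_iff₀ two_pos]
    nlinarith [(le_div_iff₀' hN).1 hθ, pi_pos]
  have hsin : Real.sin (N * θ / 2) ≠ 0 := by
    rw [Ne, sin_eq_zero_iff_of_lt_of_lt (abs_lt.1 hNθ).1 (abs_lt.1 hNθ).2]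
    positivity
  have hsin_le := pow_le_pow_left₀ (by positivity) (mul_abs_sin_le_mul_abs_sin hp hpN hθ) 2
  rw [mul_pow, mul_pow, sq_abs, sq_abs] at hsin_le
  calc (p : ℝ) ^ 2 * (q ^ N * Real.sin (N * θ / 2) ^ 2)
      = q ^ N * (p ^ 2 * Real.sin (N * θ / 2) ^ 2) := by ring
    _ < q ^ p * (p ^ 2 * Real.sin (N * θ / 2) ^ 2) := by
      have : (0 : ℝ) < p := by exact_mod_cast hp
      exact mul_lt_mul_of_pos_right (pow_lt_pow_right_of_lt_one₀ hq₀ hq₁ hpN) (by positivity)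
    _ ≤ q ^ p * (N ^ 2 * Real.sin (p * θ / 2) ^ 2) := by gcongr
    _ = N ^ 2 * (q ^ p * Real.sin (p * θ / 2) ^ 2) := by ring

end RealInequalities

theorem Complex.norm_one_sub_exp_sq (t : ℂ) :
    ‖1 - exp t‖ ^ 2 = (1 - Real.exp t.re) ^ 2 + 4 * Real.exp t.re * Real.sin (t.im / 2) ^ 2 := by
  have hcos : Real.cos t.im = 1 - 2 * Real.sin (t.im / 2) ^ 2 := by
    rw [← mul_div_cancel₀ t.im two_ne_zero, Real.cos_two_mul', Real.cos_sq',
      mul_div_cancel_left₀ _ two_ne_zero]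
    ring
  rw [Complex.sq_norm, normSq_apply, sub_re, sub_im, one_re, one_im, exp_re, exp_im]
  linear_combination Real.exp t.re ^ 2 * Real.sin_sq_add_cos_sq t.im - 2 * Real.exp t.re * hcos

theorem Complex.norm_pow_sub_mul_exp_pow_sq (z s : ℂ) (n : ℕ) :
    ‖z ^ n - (z * exp s) ^ n‖ ^ 2 = (‖z‖ ^ n - ‖z * exp s‖ ^ n) ^ 2 +
      4 * (‖z‖ * ‖z * exp s‖) ^ n * Real.sin (n * s.im / 2) ^ 2 := by
  have hfactor : z ^ n - (z * exp s) ^ n = z ^ n * (1 - exp (n * s)) := by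
    rw [mul_pow, ← exp_nat_mul]; ring
  rw [hfactor, norm_mul, mul_pow, norm_one_sub_exp_sq, norm_mul, norm_exp, norm_pow]
  simp only [mul_re, mul_im, natCast_re, natCast_im, zero_mul, sub_zero, add_zero,
    Real.exp_nat_mul]
  ring

theorem Complex.mul_norm_pow_sub_mul_exp_pow_lt {p N : ℕ} (hp : 0 < p) (hpN : p < N) {z s : ℂ}
    (hz : ‖z‖ < 1) (hzs : ‖z * exp s‖ < 1) (hs : |s.im| ≤ Real.pi / N) (hne : z * exp s ≠ z) :
    p * ‖z ^ N - (z * exp s) ^ N‖ < N * ‖z ^ p - (z * exp s) ^ p‖ := by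
  have hz₀ : z ≠ 0 := by rintro rfl; simp at hne
  have hr₁ : 0 < ‖z‖ := norm_pos_iff.2 hz₀
  have hr₂ : 0 < ‖z * exp s‖ := norm_pos_iff.2 (mul_ne_zero hz₀ (exp_ne_zero s))
  refine lt_of_pow_lt_pow_left₀ 2 (by positivity) ?_
  rw [mul_pow (p : ℝ), mul_pow (N : ℝ), norm_pow_sub_mul_exp_pow_sq, norm_pow_sub_mul_exp_pow_sq]
  rcases eq_or_ne s.im 0 with him | him
  · have hr : ‖z‖ ≠ ‖z * exp s‖ := by
      intro h
      rw [norm_mul, norm_exp] at h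
      have hre : s.re = 0 :=
        Real.exp_eq_one_iff _ |>.1 (mul_left_cancel₀ hr₁.ne' (by rw [mul_one, ← h]))
      have hs₀ : s = 0 := Complex.ext_iff.2 ⟨by simpa using hre, by simpa using him⟩
      exact hne (by rw [hs₀, exp_zero, mul_one])
    have hA := sq_mul_pow_sub_pow_lt hp hpN ⟨hr₁.le, hz.le⟩ ⟨hr₂.le, hzs.le⟩ hr
    simpa [him] using hA
  · have hA : (p : ℝ) ^ 2 * (‖z‖ ^ N - ‖z * exp s‖ ^ N) ^ 2 ≤
        N ^ 2 * (‖z‖ ^ p - ‖z * exp s‖ ^ p) ^ 2 := by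
      rcases eq_or_ne ‖z‖ ‖z * exp s‖ with h | h
      · rw [h, sub_self, sub_self]; simp
      · exact (sq_mul_pow_sub_pow_lt hp hpN ⟨hr₁.le, hz.le⟩ ⟨hr₂.le, hzs.le⟩ h).le
    have hB := sq_mul_pow_mul_sin_sq_lt hp hpN (mul_pos hr₁ hr₂)
      (mul_lt_one_of_nonneg_of_lt_one_left hr₁.le hz hzs.le) hs him
    linear_combination hA + 4 * hB

theorem Complex.abs_arg_le_of_norm_sub_one_le {ζ : ℂ} {c : ℝ} (hc : c ≤ 1)
    (h : ‖ζ - 1‖ ≤ c * ‖ζ‖) : |arg ζ| ≤ Real.pi / 2 * c := by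
  have hζ : ζ ≠ 0 := by rintro rfl; norm_num at h
  have hζpos : 0 < ‖ζ‖ := norm_pos_iff.2 hζ
  have hc₀ : 0 ≤ c := nonneg_of_mul_nonneg_left ((norm_nonneg _).trans h) hζpos
  have hsq := pow_le_pow_left₀ (norm_nonneg _) h 2
  rw [mul_pow, Complex.sq_norm, Complex.sq_norm, normSq_apply, normSq_apply, sub_re, sub_im,
    one_re, one_im, sub_zero] at hsq
  have hc₁ : c ^ 2 ≤ 1 := pow_le_one₀ hc₀ hc
  have hre : 0 < ζ.re := by
    nlinarith [mul_nonneg (sub_nonneg.2 hc₁)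
      (add_nonneg (mul_self_nonneg ζ.re) (mul_self_nonneg ζ.im))]
  have hsin : |Real.sin (arg ζ)| ≤ c := by
    rw [sin_arg, abs_div, abs_norm, div_le_iff₀ hζpos]
    refine abs_le_of_sq_le_sq ?_ (by positivity)
    rw [mul_pow, Complex.sq_norm, normSq_apply]
    nlinarith
  have harg : |arg ζ| ≤ Real.pi / 2 := (abs_arg_lt_pi_div_two_iff.2 (Or.inl hre)).le
  have hjordan := Real.mul_le_sin (abs_nonneg (arg ζ)) harg
  rw [← Real.abs_sin_eq_sin_abs_of_abs_le_pi (abs_arg_le_pi ζ)] at hjordan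
  have := Real.pi_pos
  rw [div_mul_eq_mul_div, div_le_iff₀ this] at hjordan
  nlinarith

section PowAddConj

open ComplexConjugate Polynomial

variable {p N : ℕ} {C w z z₁ z₂ : ℂ}

theorem norm_pow_sub_eq_of_pow_add_conj_eq (h : z ^ p + conj (C * z ^ N) = w) :
    ‖z ^ p - w‖ = ‖C‖ * ‖z‖ ^ N := by
  rw [← h, sub_add_cancel_left, norm_neg, Complex.norm_conj, norm_mul, norm_pow]

theorem norm_pow_sub_pow_eq_of_pow_add_conj_eq (h₁ : z₁ ^ p + conj (C * z₁ ^ N) = w)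
    (h₂ : z₂ ^ p + conj (C * z₂ ^ N) = w) :
    ‖z₁ ^ p - z₂ ^ p‖ = ‖C‖ * ‖z₁ ^ N - z₂ ^ N‖ := by
  have hdiff : z₁ ^ p - z₂ ^ p = conj (C * (z₂ ^ N - z₁ ^ N)) := by
    rw [map_mul, map_sub]
    rw [map_mul] at h₁ h₂
    linear_combination h₁ - h₂
  rw [hdiff, Complex.norm_conj, norm_mul, norm_sub_rev]

theorem eq_zero_of_pow_add_conj_eq_zero (hpN : p < N) (hC : ‖C‖ ≤ 1) (hz : ‖z‖ < 1)
    (h : z ^ p + conj (C * z ^ N) = 0) : z = 0 := by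
  by_contra hz₀
  have hnorm := norm_pow_sub_eq_of_pow_add_conj_eq h
  rw [sub_zero, norm_pow] at hnorm
  have hlt : ‖z‖ ^ N < ‖z‖ ^ p := pow_lt_pow_right_of_lt_one₀ (norm_pos_iff.2 hz₀) hz hpN
  nlinarith [pow_nonneg (norm_nonneg z) N]

theorem abs_arg_pow_div_le_of_pow_add_conj_eq (hpN : p ≤ N) (hC : ‖C‖ ≤ p / N) (hz : ‖z‖ ≤ 1)
    (hw : w ≠ 0) (h : z ^ p + conj (C * z ^ N) = w) :
    |arg (z ^ p / w)| ≤ Real.pi / 2 * (p / N) := by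
  have hpN' : (p : ℝ) / N ≤ 1 := div_le_one_of_le₀ (by exact_mod_cast hpN) N.cast_nonneg
  refine (abs_arg_le_of_norm_sub_one_le (hC.trans hpN') ?_).trans (by gcongr)
  rw [div_sub_one hw, norm_div, norm_pow_sub_eq_of_pow_add_conj_eq h, norm_div, norm_pow,
    mul_div_assoc]
  exact mul_le_mul_of_nonneg_left (div_le_div_of_nonneg_right
    (pow_le_pow_of_le_one (norm_nonneg z) hz hpN) (norm_nonneg w)) (norm_nonneg C)

theorem mul_exp_neg_log_pow_div_pow (hp : p ≠ 0) (hz : z ≠ 0) (hw : w ≠ 0) :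
    (z * exp (-log (z ^ p / w) / p)) ^ p = w := by
  rw [mul_pow, ← exp_nat_mul, mul_div_cancel₀ _ (Nat.cast_ne_zero.2 hp), exp_neg,
    exp_log (div_ne_zero (pow_ne_zero p hz) hw)]
  field_simp

theorem eq_of_pow_add_conj_eq_of_mul_exp_eq (hp : 0 < p) (hpN : p < N) (hC : ‖C‖ ≤ p / N)
    (hw : w ≠ 0) (hz₁ : ‖z₁‖ < 1) (hz₂ : ‖z₂‖ < 1) (h₁ : z₁ ^ p + conj (C * z₁ ^ N) = w)
    (h₂ : z₂ ^ p + conj (C * z₂ ^ N) = w)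
    (hroot : z₁ * exp (-log (z₁ ^ p / w) / p) = z₂ * exp (-log (z₂ ^ p / w) / p)) :
    z₁ = z₂ := by
  by_contra hne
  set L₁ := log (z₁ ^ p / w)
  set L₂ := log (z₂ ^ p / w)
  set s := (L₂ - L₁) / p
  have hz₂s : z₂ = z₁ * exp s := by
    calc z₂ = z₂ * exp (-L₂ / p) * exp (L₂ / p) := by
          rw [mul_assoc, ← exp_add, neg_div, neg_add_cancel, exp_zero, mul_one]
      _ = z₁ * exp s := by rw [← hroot, mul_assoc, ← exp_add, neg_div, neg_add_eq_sub, ← sub_div]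
  have hp' : (0 : ℝ) < p := by exact_mod_cast hp
  have hs : |s.im| ≤ Real.pi / N := by
    have harg₁ := abs_arg_pow_div_le_of_pow_add_conj_eq hpN.le hC hz₁.le hw h₁
    have harg₂ := abs_arg_pow_div_le_of_pow_add_conj_eq hpN.le hC hz₂.le hw h₂
    rw [Complex.div_natCast_im, sub_im, log_im, log_im, abs_div, Nat.abs_cast,
      div_le_iff₀ hp']
    calc |arg (z₂ ^ p / w) - arg (z₁ ^ p / w)|
        ≤ |arg (z₂ ^ p / w)| + |arg (z₁ ^ p / w)| := abs_sub _ _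
      _ ≤ Real.pi / 2 * (p / N) + Real.pi / 2 * (p / N) := add_le_add harg₂ harg₁
      _ = Real.pi / N * p := by ring
  have hlt := mul_norm_pow_sub_mul_exp_pow_lt hp hpN hz₁ (by rwa [← hz₂s]) hs
    (by rw [← hz₂s]; exact Ne.symm hne)
  rw [← hz₂s] at hlt
  have hNC : (N : ℝ) * ‖C‖ ≤ p := (le_div_iff₀' (by exact_mod_cast hp.trans hpN)).1 hC
  rw [norm_pow_sub_pow_eq_of_pow_add_conj_eq h₁ h₂] at hlt
  nlinarith [norm_nonneg (z₁ ^ N - z₂ ^ N)]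

theorem finite_setOf_pow_add_conj_eq_and_ncard_le (hp : 0 < p) (hpN : p < N)
    (hC : ‖C‖ ≤ p / N) (w : ℂ) :
    {z : ℂ | ‖z‖ < 1 ∧ z ^ p + conj (C * z ^ N) = w}.Finite ∧
      {z : ℂ | ‖z‖ < 1 ∧ z ^ p + conj (C * z ^ N) = w}.ncard ≤ p := by
  set S := {z : ℂ | ‖z‖ < 1 ∧ z ^ p + conj (C * z ^ N) = w}
  set G : ℂ → ℂ := fun z => z * exp (-log (z ^ p / w) / p)
  rcases eq_or_ne w 0 with rfl | hw
  · have hC₁ : ‖C‖ ≤ 1 := hC.trans (div_le_one_of_le₀ (by exact_mod_cast hpN.le) N.cast_nonneg)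
    have hS : S ⊆ {0} := fun z hz => eq_zero_of_pow_add_conj_eq_zero hpN hC₁ hz.1 hz.2
    exact ⟨(Set.finite_singleton 0).subset hS,
      (Set.ncard_le_ncard hS).trans (by rw [Set.ncard_singleton]; exact hp)⟩
  have hmaps : Set.MapsTo G S (nthRootsFinset p w) := by
    rintro z ⟨-, hz⟩
    have hz₀ : z ≠ 0 := by
      rintro rfl
      simp [zero_pow hp.ne', zero_pow (hp.trans hpN).ne', hw.symm] at hz
    exact (mem_nthRootsFinset hp w).2 (mul_exp_neg_log_pow_div_pow hp.ne' hz₀ hw)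
  have hinj : Set.InjOn G S :=
    fun z₁ h₁ z₂ h₂ => eq_of_pow_add_conj_eq_of_mul_exp_eq hp hpN hC hw h₁.1 h₂.1 h₁.2 h₂.2
  have hcard : (nthRootsFinset p w).card ≤ p := by
    classical
    rw [nthRootsFinset_def]
    exact (Multiset.toFinset_card_le _).trans (card_nthRoots p w)
  refine ⟨(Finset.finite_toSet _).of_injOn hmaps hinj, ?_⟩
  calc S.ncard ≤ (nthRootsFinset p w : Set ℂ).ncard :=
        Set.ncard_le_ncard_of_injOn _ hmaps hinj (Finset.finite_toSet _)
    _ ≤ p := by rwa [Set.ncard_coe_finset]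

end PowAddConj

/-- f(z) = z^p + conj((p/(p+m−1)) z^{p+m−1}) is p-valent on the unit disk:
every value w is attained at most p times in |z| < 1. -/
theorem stmt_6 (p m : ℕ) (hp : 1 ≤ p) (hm : 2 ≤ m)
    (f : ℂ → ℂ)
    (hf : ∀ z : ℂ, f z = z ^ p +
      (starRingEnd ℂ) (((p : ℂ) / ((p : ℂ) + (m : ℂ) - 1)) * z ^ (p + m - 1)))
    (w : ℂ) :
    {z : ℂ | ‖z‖ < 1 ∧ f z = w}.Finite ∧
    {z : ℂ | ‖z‖ < 1 ∧ f z = w}.ncard ≤ p := by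
  have hN : (p : ℂ) + m - 1 = ((p + m - 1 : ℕ) : ℂ) := by
    push_cast [Nat.cast_sub (by omega : 1 ≤ p + m)]
    ring
  simp only [hf, hN]
  exact finite_setOf_pow_add_conj_eq_and_ncard_le hp (by omega)
    (by rw [norm_div, Complex.norm_natCast, Complex.norm_natCast]) w
end

section
/- Let p ≥ 1, m ≥ 2 be integers and let h(z) = z^p + (c/(p+1)) z^{p+1} with c ∈ ℂ satisfying |c| ≤ p − 2p/(2p+m+1). Then Re(1 + z h''(z)/h'(z)) > −(m−1)/2 for all z in the open unit disk. -/
open Complex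

/-!
Since `h'(z) = z^(p-1) (p + c z)`, away from `z = 0` one has
`1 + z h''(z) / h'(z) = p + w / (p + w)` with `w = c z`. For `|w| = t < p` the real part of
`w / (p + w)` is at least `-t / (p - t)`, and `p - t / (p - t) > -(m - 1) / 2` is equivalent to
`t (2p + m + 1) < p (2p + m - 1)`, i.e. to `t < p - 2p / (2p + m + 1)`, which follows from
the bound on `|c|` and `|z| < 1`.
-/

lemma mul_natCast_mul_pow_pred {R : Type*} [CommSemiring R] (n : ℕ) (w : R) :
    w * (n * w ^ (n - 1)) = n * w ^ n := by
  rcases n with _ | n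
  · simp
  · rw [Nat.add_sub_cancel, pow_succ]
    ring

noncomputable def powAddPowSucc (p : ℕ) (c : ℂ) (w : ℂ) : ℂ :=
  w ^ p + c / ((p : ℂ) + 1) * w ^ (p + 1)

section
variable (p : ℕ) (c : ℂ)

lemma hasDerivAt_powAddPowSucc (w : ℂ) :
    HasDerivAt (powAddPowSucc p c) (p * w ^ (p - 1) + c * w ^ p) w := by
  have : ((p : ℂ) + 1) ≠ 0 := by exact_mod_cast p.succ_ne_zero
  have hd : HasDerivAt (powAddPowSucc p c)
      (p * w ^ (p - 1) + c / (p + 1) * ((p + 1 : ℕ) * w ^ (p + 1 - 1))) w :=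
    (hasDerivAt_pow p w).add ((hasDerivAt_pow (p + 1) w).const_mul (c / (p + 1)))
  convert hd using 1
  push_cast
  field_simp

lemma deriv_powAddPowSucc : deriv (powAddPowSucc p c) = fun w => p * w ^ (p - 1) + c * w ^ p :=
  funext fun w => (hasDerivAt_powAddPowSucc p c w).deriv

lemma mul_deriv_deriv_powAddPowSucc (z : ℂ) :
    z * deriv (deriv (powAddPowSucc p c)) z = p * ((p - 1 : ℕ) * z ^ (p - 1) + c * z ^ p) := by
  have hd : HasDerivAt (fun w : ℂ => p * w ^ (p - 1) + c * w ^ p)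
      (p * ((p - 1 : ℕ) * z ^ (p - 1 - 1)) + c * (p * z ^ (p - 1))) z :=
    ((hasDerivAt_pow (p - 1) z).const_mul (p : ℂ)).add ((hasDerivAt_pow p z).const_mul c)
  rw [deriv_powAddPowSucc, hd.deriv]
  linear_combination (p : ℂ) * mul_natCast_mul_pow_pred (p - 1) z
    + c * mul_natCast_mul_pow_pred p z

end

lemma one_add_mul_deriv_deriv_div_deriv_powAddPowSucc (c : ℂ) {p : ℕ} (hp : 1 ≤ p) {z : ℂ}
    (hz : z ≠ 0) (hpcz : (p : ℂ) + c * z ≠ 0) :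
    1 + z * deriv (deriv (powAddPowSucc p c)) z / deriv (powAddPowSucc p c) z
      = p + c * z / (p + c * z) := by
  have hpow : z ^ p = z ^ (p - 1) * z := by rw [← pow_succ, Nat.sub_add_cancel hp]
  have hderiv : deriv (powAddPowSucc p c) z = z ^ (p - 1) * (p + c * z) := by
    rw [(hasDerivAt_powAddPowSucc p c z).deriv, hpow]
    ring
  rw [mul_deriv_deriv_powAddPowSucc, hderiv, Nat.cast_pred hp, hpow]
  have : z ^ (p - 1) ≠ 0 := pow_ne_zero _ hz
  field_simp
  ring

lemma sub_norm_le_norm_ofReal_add {r : ℝ} (hr : 0 ≤ r) (w : ℂ) :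
    r - ‖w‖ ≤ ‖(r : ℂ) + w‖ := by
  simpa [abs_of_nonneg hr] using norm_sub_norm_le (r : ℂ) (-w)

lemma neg_div_sub_norm_le_re_div_add {r : ℝ} {w : ℂ} (hw : ‖w‖ < r) :
    -(‖w‖ / (r - ‖w‖)) ≤ (w / (r + w)).re := by
  have hden := sub_norm_le_norm_ofReal_add ((norm_nonneg w).trans hw.le) w
  calc -(‖w‖ / (r - ‖w‖)) ≤ -‖w / (r + w)‖ := by
        rw [norm_div, neg_le_neg_iff]
        exact div_le_div_of_nonneg_left (norm_nonneg w) (sub_pos.mpr hw) hden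
    _ ≤ (w / (r + w)).re := neg_le_of_abs_le (abs_re_le_norm _)

lemma neg_half_lt_sub_div_sub {p m t : ℝ} (hpm : 0 < 2 * p + m + 1)
    (ht : t < p - 2 * p / (2 * p + m + 1)) (htp : t < p) :
    -((m - 1) / 2) < p - t / (p - t) := by
  have hpt : 0 < p - t := sub_pos.mpr htp
  have ht' : t * (2 * p + m + 1) < p * (2 * p + m - 1) := by
    rw [lt_sub_comm, div_lt_iff₀ hpm] at ht
    linarith
  have : t / (p - t) < p + (m - 1) / 2 := by
    rw [div_lt_iff₀ hpt]
    linarith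
  linarith

theorem stmt_8_general (p m : ℕ) (hp : 1 ≤ p) (c : ℂ)
    (hc : ‖c‖ ≤ (p : ℝ) - 2 * p / (2 * p + m + 1))
    (h : ℂ → ℂ)
    (hh : ∀ z : ℂ, h z = z ^ p + (c / ((p : ℂ) + 1)) * z ^ (p + 1))
    (z : ℂ) (hz : ‖z‖ < 1) :
    ((1 : ℂ) + z * deriv (deriv h) z / deriv h z).re > -(((m : ℝ) - 1) / 2) := by
  obtain rfl : h = powAddPowSucc p c := funext hh
  rcases eq_or_ne z 0 with rfl | hz0
  · simp only [zero_mul, zero_div, add_zero, one_re, gt_iff_lt]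
    linarith [m.cast_nonneg (α := ℝ)]
  have hpm : (0 : ℝ) < 2 * p + m + 1 := by positivity
  have hbound : 2 * p / (2 * p + m + 1) < (p : ℝ) := by
    rw [div_lt_iff₀ hpm]
    nlinarith [(Nat.one_le_cast (α := ℝ)).mpr hp]
  have hcz : ‖c * z‖ < p - 2 * p / (2 * p + m + 1) := by
    rw [norm_mul]
    calc ‖c‖ * ‖z‖ ≤ (p - 2 * p / (2 * p + m + 1)) * ‖z‖ := by gcongr
      _ < _ := mul_lt_of_lt_one_right (sub_pos.mpr hbound) hz
  have hczp : ‖c * z‖ < p := hcz.trans (sub_lt_self _ (by positivity))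
  have hpcz : (p : ℂ) + c * z ≠ 0 := by
    have := (sub_pos.mpr hczp).trans_le (sub_norm_le_norm_ofReal_add p.cast_nonneg (c * z))
    exact_mod_cast norm_pos_iff.mp this
  rw [one_add_mul_deriv_deriv_div_deriv_powAddPowSucc c hp hz0 hpcz, gt_iff_lt]
  calc -(((m : ℝ) - 1) / 2) < p - ‖c * z‖ / (p - ‖c * z‖) :=
        neg_half_lt_sub_div_sub hpm hcz hczp
    _ ≤ ((p : ℂ) + c * z / (p + c * z)).re := by
      have := neg_div_sub_norm_le_re_div_add hczp
      push_cast at this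
      simp only [add_re, natCast_re]
      linarith

/-- for h(z) = z^p + (c/(p+1)) z^{p+1} with |c| ≤ p − 2p/(2p+m+1),
Re(1 + z h''(z)/h'(z)) > −(m−1)/2 on the open unit disk. -/
theorem stmt_8 (p m : ℕ) (hp : 1 ≤ p) (hm : 2 ≤ m) (c : ℂ)
    (hc : ‖c‖ ≤ (p : ℝ) - 2 * p / (2 * p + m + 1))
    (h : ℂ → ℂ)
    (hh : ∀ z : ℂ, h z = z ^ p + (c / ((p : ℂ) + 1)) * z ^ (p + 1))
    (z : ℂ) (hz : ‖z‖ < 1) :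
    ((1 : ℂ) + z * deriv (deriv h) z / deriv h z).re > -(((m : ℝ) - 1) / 2) :=
  stmt_8_general p m hp c hc h hh z hz
end

section
/- Let p ≥ 1, m ≥ 2 be integers. The boundary curve φ(t) = e^{ipt} + (p/(p+m−1)) e^{−i(p+m−1)t}, t ∈ [−π, π), of f(z) = z^p + conj((p/(p+m−1)) z^{p+m−1}) satisfies Im(φ''(t) conj(φ'(t))) = −p²(m−1)(1 − cos((2p+m−1)t)) ≤ 0 for all t, with equality exactly when e^{i(2p+m−1)t} = 1. -/
/-!
Differentiating twice gives `φ' = i a u - i c b v` and `φ'' = -a² u - c b² v` with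
`u = e^{iat}`, `v = e^{-ibt}` unimodular, so `Im (φ'' · conj φ') = a³ - c² b³ + a b c (b - a) cos ((a+b) t)`,
the cross terms being `u · conj v = e^{i(a+b)t}` and its conjugate. For `a = p`, `b = p + m - 1`, `c = a / b` this is
`-a² (b - a) (1 - cos ((a+b) t))`, which vanishes exactly where the cosine equals `1`.
-/

open Complex ComplexConjugate

lemma hasDerivAt_cexp_mul_ofReal (α : ℂ) (t : ℝ) :
    HasDerivAt (fun s : ℝ => exp (α * s)) (α * exp (α * t)) t := by
  simpa [mul_comm] using ((ofRealCLM.hasDerivAt (x := t)).const_mul α).cexp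

lemma deriv_const_mul_cexp_add (k₁ k₂ α β : ℂ) :
    deriv (fun s : ℝ => k₁ * exp (α * s) + k₂ * exp (β * s)) =
      fun s : ℝ => k₁ * α * exp (α * s) + k₂ * β * exp (β * s) := by
  funext t
  exact ((((hasDerivAt_cexp_mul_ofReal α t).const_mul k₁).add
    ((hasDerivAt_cexp_mul_ofReal β t).const_mul k₂)).congr_deriv (by ring)).deriv

lemma cexp_ofReal_mul_I_eq_one_iff (x : ℝ) : exp (x * I) = 1 ↔ Real.cos x = 1 := by
  rw [Complex.exp_eq_one_iff, Real.cos_eq_one_iff]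
  refine exists_congr fun n => ⟨fun h => ?_, fun h => ?_⟩
  · have h' : (x : ℂ) * I = ((n * (2 * Real.pi) : ℝ) : ℂ) * I := by rw [h]; push_cast; ring
    exact_mod_cast (mul_right_cancel₀ I_ne_zero h').symm
  · rw [← h]; push_cast; ring

lemma im_deriv_deriv_mul_conj_deriv_of_eq_cexp_add (a b c t : ℝ) (φ : ℝ → ℂ)
    (hφ : ∀ s : ℝ, φ s = exp (I * a * s) + c * exp (-I * b * s)) :
    (deriv (deriv φ) t * conj (deriv φ t)).im =
      a ^ 3 - c ^ 2 * b ^ 3 + a * b * c * (b - a) * Real.cos ((a + b) * t) := by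
  have hφ' : φ = fun s : ℝ => 1 * exp (I * a * s) + c * exp (-I * b * s) := by
    funext s; rw [hφ, one_mul]
  simp only [hφ', deriv_const_mul_cexp_add]
  have hu : exp (I * a * t) = Real.cos (a * t) + Real.sin (a * t) * I := by
    rw [show I * a * t = ((a * t : ℝ) : ℂ) * I by push_cast; ring, exp_mul_I,
      ← ofReal_cos, ← ofReal_sin]
  have hv : exp (-I * b * t) = Real.cos (b * t) - Real.sin (b * t) * I := by
    rw [show -I * b * t = ((-(b * t) : ℝ) : ℂ) * I by push_cast; ring, exp_mul_I,
      ← ofReal_cos, ← ofReal_sin, Real.cos_neg, Real.sin_neg]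
    push_cast; ring
  have hu_norm := Real.sin_sq_add_cos_sq (a * t)
  have hv_norm := Real.sin_sq_add_cos_sq (b * t)
  rw [hu, hv, show (a + b) * t = a * t + b * t by ring, Real.cos_add]
  generalize Real.cos (a * t) = x₁ at hu_norm ⊢
  generalize Real.sin (a * t) = y₁ at hu_norm ⊢
  generalize Real.cos (b * t) = x₂ at hv_norm ⊢
  generalize Real.sin (b * t) = y₂ at hv_norm ⊢
  simp only [one_mul, neg_mul, mul_neg, neg_neg, map_add, map_mul, conj_I, conj_ofReal, map_neg,
    map_sub, sub_neg_eq_add, mul_im, add_re, mul_re, I_re, ofReal_re, zero_mul, I_im, ofReal_im,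
    mul_zero, sub_self, zero_add, zero_sub, mul_one, add_zero, add_im, sub_zero, sub_re, sub_im,
    neg_zero, neg_im, neg_re]
  linear_combination a ^ 3 * hu_norm - c ^ 2 * b ^ 3 * hv_norm

lemma im_deriv_deriv_mul_conj_deriv_of_eq_cexp_add_div (a b t : ℝ) (hb : b ≠ 0) (φ : ℝ → ℂ)
    (hφ : ∀ s : ℝ, φ s = exp (I * a * s) + (a / b : ℝ) * exp (-I * b * s)) :
    (deriv (deriv φ) t * conj (deriv φ t)).im =
      -(a ^ 2 * (b - a) * (1 - Real.cos ((a + b) * t))) := by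
  rw [im_deriv_deriv_mul_conj_deriv_of_eq_cexp_add a b (a / b) t φ hφ]
  field_simp
  ring

/-- for φ(t) = e^{ipt} + (p/(p+m−1)) e^{−i(p+m−1)t},
Im(φ''(t) conj(φ'(t))) = −p²(m−1)(1 − cos((2p+m−1)t)) ≤ 0, with equality exactly
when e^{i(2p+m−1)t} = 1. -/
theorem stmt_18 (p m : ℕ) (hp : 1 ≤ p) (hm : 2 ≤ m) (φ : ℝ → ℂ)
    (hφ : ∀ t : ℝ, φ t = Complex.exp (Complex.I * p * t) +
      ((p : ℂ) / ((p : ℂ) + (m : ℂ) - 1)) *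
        Complex.exp (-Complex.I * ((p : ℂ) + (m : ℂ) - 1) * t))
    (t : ℝ) :
    (deriv (deriv φ) t * (starRingEnd ℂ) (deriv φ t)).im =
      -((p : ℝ) ^ 2 * ((m : ℝ) - 1) * (1 - Real.cos ((2 * p + m - 1 : ℝ) * t))) ∧
    (deriv (deriv φ) t * (starRingEnd ℂ) (deriv φ t)).im ≤ 0 ∧
    ((deriv (deriv φ) t * (starRingEnd ℂ) (deriv φ t)).im = 0 ↔
      Complex.exp (Complex.I * (2 * p + m - 1 : ℝ) * t) = 1) := by
  have hp' : (1 : ℝ) ≤ p := by exact_mod_cast hp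
  have hm' : (2 : ℝ) ≤ m := by exact_mod_cast hm
  have hφ' : ∀ s : ℝ, φ s = exp (I * (p : ℝ) * s) +
      ((p / (p + m - 1) : ℝ) : ℂ) * exp (-I * (p + m - 1 : ℝ) * s) := by
    intro s; rw [hφ]; push_cast; ring
  have hIm := im_deriv_deriv_mul_conj_deriv_of_eq_cexp_add_div p (p + m - 1) t
    (by linarith) φ hφ'
  rw [show (p + m - 1 : ℝ) - p = m - 1 by ring,
    show (p : ℝ) + (p + m - 1) = 2 * p + m - 1 by ring] at hIm
  have hK : 0 < (p : ℝ) ^ 2 * (m - 1) := mul_pos (by positivity) (by linarith)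
  rw [hIm, show I * ((2 * p + m - 1 : ℝ) : ℂ) * t = (((2 * p + m - 1) * t : ℝ) : ℂ) * I by
    push_cast; ring, cexp_ofReal_mul_I_eq_one_iff]
  refine ⟨rfl, neg_nonpos.2 (mul_nonneg hK.le (sub_nonneg.2 (Real.cos_le_one _))), ?_⟩
  rw [neg_eq_zero, mul_eq_zero, or_iff_right hK.ne', sub_eq_zero, eq_comm]
end

section
/- Let m ≥ 2 be an integer. Define h and g on the open unit disk by h(z) = ∫₀^z dζ/(1+ζ^{m+1}) and g(z) = ∫₀^z ζ^{m−1} dζ/(1+ζ^{m+1}). Then g'(z) = z^{m−1} h'(z), h'(z) ≠ 0 for all |z| < 1, and Re(1 + z h''(z)/h'(z)) = Re( (1 − m z^{m+1})/(1 + z^{m+1}) ) > −(m−1)/2 for all |z| < 1. -/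
open Complex Metric

/-!
With `w = z^(m+1)` we have `h' = 1/(1+w)`, so `1 + z h''/h' = 1 - (m+1) w/(1+w) = (1 - m w)/(1+w)`,
which equals `(m+1)/(1+w) - m`. The Möbius map `w ↦ 1/(1+w)` sends the unit disk onto the
half-plane `Re > 1/2`, whence the real part exceeds `(m+1)/2 - m = -(m-1)/2`.
-/

lemma one_add_ne_zero_of_norm_lt_one {R : Type*} [NormedRing R] [NormOneClass R] {w : R}
    (hw : ‖w‖ < 1) : 1 + w ≠ 0 := by
  intro h
  rw [← neg_eq_of_add_eq_zero_right h, norm_neg, norm_one] at hw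
  exact lt_irrefl 1 hw

lemma half_lt_re_inv_one_add {w : ℂ} (hw : ‖w‖ < 1) : 1 / 2 < ((1 + w)⁻¹).re := by
  have hpos : 0 < normSq (1 + w) := normSq_pos.mpr (one_add_ne_zero_of_norm_lt_one hw)
  have hsq : normSq w < 1 := by
    rw [← Complex.sq_norm]
    nlinarith [norm_nonneg w]
  rw [inv_re, lt_div_iff₀ hpos]
  simp only [normSq_apply, add_re, add_im, one_re, one_im] at hsq ⊢
  nlinarith

lemma neg_half_sub_lt_re_div_one_add {w : ℂ} (hw : ‖w‖ < 1) {a : ℝ} (ha : -1 < a) :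
    -((a - 1) / 2) < ((1 - a * w) / (1 + w)).re := by
  have hne := one_add_ne_zero_of_norm_lt_one hw
  have hsplit : (1 - a * w) / (1 + w) = (a + 1 : ℝ) * (1 + w)⁻¹ - a := by
    push_cast
    field_simp
    ring
  rw [hsplit, sub_re, re_ofReal_mul, ofReal_re]
  linarith [mul_lt_mul_of_pos_left (half_lt_re_inv_one_add hw) (neg_lt_iff_pos_add'.mp ha)]

lemma hasDerivAt_one_div_one_add_pow {z : ℂ} (n : ℕ) (hz : 1 + z ^ (n + 1) ≠ 0) :
    HasDerivAt (fun w : ℂ => 1 / (1 + w ^ (n + 1)))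
      (-((n + 1) * z ^ n) / (1 + z ^ (n + 1)) ^ 2) z := by
  have hden : HasDerivAt (fun w : ℂ => 1 + w ^ (n + 1)) ((n + 1) * z ^ n) z := by
    simpa using (hasDerivAt_pow (n + 1) z).const_add 1
  simpa [one_div] using hden.fun_inv hz

lemma deriv_deriv_eq_of_hasDerivAt {𝕜 : Type*} [NontriviallyNormedField 𝕜] {F : Type*}
    [NormedAddCommGroup F] [NormedSpace 𝕜 F] {h f : 𝕜 → F} {f' : F} {U : Set 𝕜} {z : 𝕜}
    (hU : IsOpen U) (hzU : z ∈ U) (hh : ∀ x ∈ U, HasDerivAt h (f x) x) (hf : HasDerivAt f f' z) :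
    deriv (deriv h) z = f' := by
  have hev : deriv h =ᶠ[nhds z] f := by
    filter_upwards [hU.mem_nhds hzU] with x hx
    exact (hh x hx).deriv
  rw [hev.deriv_eq, hf.deriv]

lemma one_add_mul_div_eq {z : ℂ} (m : ℕ) (hz : 1 + z ^ (m + 1) ≠ 0) :
    1 + z * (-((m + 1) * z ^ m) / (1 + z ^ (m + 1)) ^ 2) / (1 / (1 + z ^ (m + 1))) =
      (1 - m * z ^ (m + 1)) / (1 + z ^ (m + 1)) := by
  field_simp
  ring

theorem stmt_19_general (m : ℕ) (h g : ℂ → ℂ)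
    (hd : ∀ z ∈ ball (0 : ℂ) 1, HasDerivAt h (1 / (1 + z ^ (m + 1))) z)
    (gd : ∀ z ∈ ball (0 : ℂ) 1, HasDerivAt g (z ^ (m - 1) / (1 + z ^ (m + 1))) z)
    (z : ℂ) (hz : z ∈ ball (0 : ℂ) 1) :
    deriv g z = z ^ (m - 1) * deriv h z ∧
    deriv h z ≠ 0 ∧
    ((1 : ℂ) + z * deriv (deriv h) z / deriv h z).re =
      ((1 - (m : ℂ) * z ^ (m + 1)) / (1 + z ^ (m + 1))).re ∧
    ((1 : ℂ) + z * deriv (deriv h) z / deriv h z).re > -(((m : ℝ) - 1) / 2) := by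
  have hw : ‖z ^ (m + 1)‖ < 1 := by
    rw [norm_pow]
    exact pow_lt_one₀ (norm_nonneg z) (mem_ball_zero_iff.mp hz) m.succ_ne_zero
  have hne := one_add_ne_zero_of_norm_lt_one hw
  have hh' := (hd z hz).deriv
  have hh'' := deriv_deriv_eq_of_hasDerivAt isOpen_ball hz hd
    (hasDerivAt_one_div_one_add_pow m hne)
  have hkey : 1 + z * deriv (deriv h) z / deriv h z =
      (1 - m * z ^ (m + 1)) / (1 + z ^ (m + 1)) := by
    rw [hh', hh'', one_add_mul_div_eq m hne]
  refine ⟨?_, ?_, by rw [hkey], ?_⟩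
  · rw [(gd z hz).deriv, hh']
    ring
  · rw [hh']
    exact one_div_ne_zero hne
  · rw [hkey]
    simpa using neg_half_sub_lt_re_div_one_add hw (a := m) (by linarith [m.cast_nonneg (α := ℝ)])

/-- for h, g antiderivatives on the unit disk of 1/(1+z^{m+1}) and
z^{m−1}/(1+z^{m+1}) respectively, g'(z) = z^{m−1} h'(z), h'(z) ≠ 0, and
Re(1 + z h''(z)/h'(z)) = Re((1 − m z^{m+1})/(1 + z^{m+1})) > −(m−1)/2 for |z| < 1. -/
theorem stmt_19 (m : ℕ) (hm : 2 ≤ m) (h g : ℂ → ℂ)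
    (hd : ∀ z ∈ ball (0 : ℂ) 1, HasDerivAt h (1 / (1 + z ^ (m + 1))) z)
    (gd : ∀ z ∈ ball (0 : ℂ) 1, HasDerivAt g (z ^ (m - 1) / (1 + z ^ (m + 1))) z)
    (z : ℂ) (hz : z ∈ ball (0 : ℂ) 1) :
    deriv g z = z ^ (m - 1) * deriv h z ∧
    deriv h z ≠ 0 ∧
    ((1 : ℂ) + z * deriv (deriv h) z / deriv h z).re =
      ((1 - (m : ℂ) * z ^ (m + 1)) / (1 + z ^ (m + 1))).re ∧
    ((1 : ℂ) + z * deriv (deriv h) z / deriv h z).re > -(((m : ℝ) - 1) / 2) :=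
  stmt_19_general m h g hd gd z hz
end
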